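/- Define for 0 < ε < 1/2 the function θ_ε(x,y) = π/2 − arctan( sinh(π(1−2ε)x) / sin(π((1−2ε)y + ε)) ) on Σ = ℝ × (0,1). Then θ_ε is harmonic in Σ, smooth up to the closure of Σ, and for each fixed y ∈ [0,1], θ_ε(x,y) → 0 as x → +∞ and θ_ε(x,y) → π as x → −∞. -/

import Mathlib

open Real Set Filter

private lemma aux_x (a s : ℝ) (hs : 0 < s) (x : ℝ) :
    HasDerivAt (fun x' => π / 2 - Real.arctan (Real.sinh (a * x') / s))
      (-(a * s * Real.cosh (a * x)) / (s ^ 2 + Real.sinh (a * x) ^ 2)) x := by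
  have h1 : HasDerivAt (fun x' : ℝ => a * x') a x := by
    simpa using (hasDerivAt_id x).const_mul a
  have h2 : HasDerivAt (fun x' => Real.sinh (a * x')) (Real.cosh (a * x) * a) x :=
    (Real.hasDerivAt_sinh (a * x)).comp x h1
  have h3 := h2.div_const s
  have h4 := (Real.hasDerivAt_arctan (Real.sinh (a * x) / s)).comp x h3
  have h5 := h4.const_sub (π / 2)
  refine h5.congr_deriv ?_
  have hq : (1 : ℝ) + (Real.sinh (a * x) / s) ^ 2 ≠ 0 := by positivity
  have hD : s ^ 2 + Real.sinh (a * x) ^ 2 ≠ 0 := by positivity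
  field_simp

private lemma aux_xx (a s : ℝ) (hs : 0 < s) (x : ℝ) :
    HasDerivAt (fun x' => -(a * s * Real.cosh (a * x')) / (s ^ 2 + Real.sinh (a * x') ^ 2))
      ((-(a * s * (Real.sinh (a * x) * a)) * (s ^ 2 + Real.sinh (a * x) ^ 2)
        - -(a * s * Real.cosh (a * x)) * (2 * Real.sinh (a * x) * (Real.cosh (a * x) * a)))
        / (s ^ 2 + Real.sinh (a * x) ^ 2) ^ 2) x := by
  have h1 : HasDerivAt (fun x' : ℝ => a * x') a x := by
    simpa using (hasDerivAt_id x).const_mul a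
  have hC : HasDerivAt (fun x' => Real.cosh (a * x')) (Real.sinh (a * x) * a) x :=
    (Real.hasDerivAt_cosh (a * x)).comp x h1
  have hN : HasDerivAt (fun x' => -(a * s * Real.cosh (a * x')))
      (-(a * s * (Real.sinh (a * x) * a))) x := (hC.const_mul (a * s)).neg
  have hS : HasDerivAt (fun x' => Real.sinh (a * x')) (Real.cosh (a * x) * a) x :=
    (Real.hasDerivAt_sinh (a * x)).comp x h1
  have hD : HasDerivAt (fun x' => s ^ 2 + Real.sinh (a * x') ^ 2)
      (2 * Real.sinh (a * x) * (Real.cosh (a * x) * a)) x := by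
    have := (hS.pow 2).const_add (s ^ 2)
    norm_num at this
    exact this.const_add (s ^ 2)
  exact hN.div hD (by positivity)

private lemma aux_y (b c h : ℝ) (y : ℝ) (hsy : Real.sin (π * (b * y + c)) ≠ 0) :
    HasDerivAt (fun y' => π / 2 - Real.arctan (h / Real.sin (π * (b * y' + c))))
      (π * b * h * Real.cos (π * (b * y + c))
        / (Real.sin (π * (b * y + c)) ^ 2 + h ^ 2)) y := by
  have h1 : HasDerivAt (fun y' : ℝ => π * (b * y' + c)) (π * b) y := by
    simpa using (((hasDerivAt_id y).const_mul b).add_const c).const_mul π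
  have h2 : HasDerivAt (fun y' => Real.sin (π * (b * y' + c)))
      (Real.cos (π * (b * y + c)) * (π * b)) y := (Real.hasDerivAt_sin _).comp y h1
  have h3 := (hasDerivAt_const y h).div h2 hsy
  have h4 := (Real.hasDerivAt_arctan (h / Real.sin (π * (b * y + c)))).comp y h3
  have h5 := h4.const_sub (π / 2)
  refine h5.congr_deriv ?_
  have hq : (1 : ℝ) + (h / Real.sin (π * (b * y + c))) ^ 2 ≠ 0 := by positivity
  have hD : Real.sin (π * (b * y + c)) ^ 2 + h ^ 2 ≠ 0 := by
    have := pow_pos (abs_pos.mpr hsy) 2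
    rw [← sq_abs]
    positivity
  field_simp
  ring

private lemma aux_yy (b c h : ℝ) (y : ℝ) (hsy : Real.sin (π * (b * y + c)) ≠ 0) :
    HasDerivAt (fun y' => π * b * h * Real.cos (π * (b * y' + c))
        / (Real.sin (π * (b * y' + c)) ^ 2 + h ^ 2))
      ((π * b * h * (-Real.sin (π * (b * y + c)) * (π * b))
          * (Real.sin (π * (b * y + c)) ^ 2 + h ^ 2)
        - π * b * h * Real.cos (π * (b * y + c))
          * (2 * Real.sin (π * (b * y + c)) * (Real.cos (π * (b * y + c)) * (π * b))))
        / (Real.sin (π * (b * y + c)) ^ 2 + h ^ 2) ^ 2) y := by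
  have h1 : HasDerivAt (fun y' : ℝ => π * (b * y' + c)) (π * b) y := by
    simpa using (((hasDerivAt_id y).const_mul b).add_const c).const_mul π
  have hcos : HasDerivAt (fun y' => Real.cos (π * (b * y' + c)))
      (-Real.sin (π * (b * y + c)) * (π * b)) y := (Real.hasDerivAt_cos _).comp y h1
  have hN := hcos.const_mul (π * b * h)
  have hsin : HasDerivAt (fun y' => Real.sin (π * (b * y' + c)))
      (Real.cos (π * (b * y + c)) * (π * b)) y := (Real.hasDerivAt_sin _).comp y h1
  have hDen : HasDerivAt (fun y' => Real.sin (π * (b * y' + c)) ^ 2 + h ^ 2)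
      (2 * Real.sin (π * (b * y + c)) * (Real.cos (π * (b * y + c)) * (π * b))) y := by
    have := (hsin.pow 2).add_const (h ^ 2)
    norm_num at this
    exact this.add_const (h ^ 2)
  have hD : Real.sin (π * (b * y + c)) ^ 2 + h ^ 2 ≠ 0 := by
    have := pow_pos (abs_pos.mpr hsy) 2
    rw [← sq_abs]
    positivity
  exact hN.div hDen hD

private lemma sinh_tendsto_atTop : Tendsto Real.sinh atTop atTop := by
  apply tendsto_atTop_mono' atTop _ tendsto_id
  filter_upwards [eventually_gt_atTop (0 : ℝ)] with x hx
  exact (Real.self_lt_sinh_iff.mpr hx).le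

private lemma sinh_tendsto_atBot : Tendsto Real.sinh atBot atBot := by
  apply tendsto_atBot_mono' atBot _ tendsto_id
  filter_upwards [eventually_lt_atBot (0 : ℝ)] with x hx
  exact (Real.sinh_lt_self_iff.mpr hx).le

/-- For `0 < ε < 1/2`, the function
`θ_ε(x,y) = π/2 − arctan(sinh(π(1−2ε)x)/sin(π((1−2ε)y + ε)))` is smooth up to the
closed strip `ℝ × [0,1]`, harmonic in `ℝ × (0,1)`, and for each fixed `y ∈ [0,1]`
tends to `0` at `x → +∞` and to `π` at `x → −∞`. -/
theorem theta_eps_properties (ε : ℝ) (hε : ε ∈ Ioo (0:ℝ) (1 / 2)) :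
    let θe : ℝ → ℝ → ℝ := fun x y =>
      π / 2 - Real.arctan (Real.sinh (π * (1 - 2 * ε) * x) /
        Real.sin (π * ((1 - 2 * ε) * y + ε)))
    ContDiffOn ℝ (⊤ : ℕ∞) (fun p : ℝ × ℝ => θe p.1 p.2) (univ ×ˢ Icc (0:ℝ) 1) ∧
    (∀ x : ℝ, ∀ y ∈ Ioo (0:ℝ) 1,
      deriv (fun x' => deriv (fun x'' => θe x'' y) x') x
        + deriv (fun y' => deriv (fun y'' => θe x y'') y') y = 0) ∧
    (∀ y ∈ Icc (0:ℝ) 1,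
      Tendsto (fun x => θe x y) atTop (nhds 0) ∧
      Tendsto (fun x => θe x y) atBot (nhds π)) := by
  obtain ⟨hε0, hε2⟩ := hε
  intro θe
  have hπ := Real.pi_pos
  have hε1 : (0:ℝ) < 1 - 2 * ε := by linarith
  have ha : 0 < π * (1 - 2 * ε) := mul_pos hπ hε1
  have hsin : ∀ y : ℝ, y ∈ Icc (0:ℝ) 1 → 0 < Real.sin (π * ((1 - 2 * ε) * y + ε)) := by
    intro y hy
    apply Real.sin_pos_of_pos_of_lt_pi
    · have : 0 < (1 - 2 * ε) * y + ε := by nlinarith [hy.1]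
      exact mul_pos hπ this
    · have h1 : (1 - 2 * ε) * y + ε < 1 := by nlinarith [hy.2]
      nlinarith
  refine ⟨?_, ?_, ?_⟩
  · -- smoothness
    intro p hp
    have hs := (hsin p.2 hp.2).ne'
    apply ContDiffAt.contDiffWithinAt
    apply ContDiffAt.sub contDiffAt_const
    apply ContDiffAt.comp p Real.contDiff_arctan.contDiffAt
    exact ContDiffAt.div
      ((Real.contDiff_sinh.comp (contDiff_const.mul contDiff_fst)).contDiffAt)
      ((Real.contDiff_sin.comp
        (contDiff_const.mul ((contDiff_const.mul contDiff_snd).add contDiff_const))).contDiffAt)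
      hs
  · -- harmonicity
    intro x y hy
    have hyI : y ∈ Icc (0:ℝ) 1 := ⟨hy.1.le, hy.2.le⟩
    have hs : 0 < Real.sin (π * ((1 - 2 * ε) * y + ε)) := hsin y hyI
    have e1 : (fun x' => deriv (fun x'' => θe x'' y) x')
        = (fun x' => -(π * (1 - 2 * ε) * Real.sin (π * ((1 - 2 * ε) * y + ε))
            * Real.cosh (π * (1 - 2 * ε) * x'))
          / (Real.sin (π * ((1 - 2 * ε) * y + ε)) ^ 2
            + Real.sinh (π * (1 - 2 * ε) * x') ^ 2)) :=
      funext fun x' => (aux_x (π * (1 - 2 * ε)) _ hs x').deriv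
    have e2 : (fun y' => deriv (fun y'' => θe x y'') y')
        =ᶠ[nhds y] (fun y' => π * (1 - 2 * ε) * Real.sinh (π * (1 - 2 * ε) * x)
            * Real.cos (π * ((1 - 2 * ε) * y' + ε))
          / (Real.sin (π * ((1 - 2 * ε) * y' + ε)) ^ 2
            + Real.sinh (π * (1 - 2 * ε) * x) ^ 2)) := by
      have hcont : ContinuousAt (fun y' : ℝ => Real.sin (π * ((1 - 2 * ε) * y' + ε))) y := by
        fun_prop
      filter_upwards [hcont.eventually_ne hs.ne'] with y' hy'
      exact (aux_y (1 - 2 * ε) ε (Real.sinh (π * (1 - 2 * ε) * x)) y' hy').deriv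
    rw [e1, e2.deriv_eq,
      (aux_xx (π * (1 - 2 * ε)) _ hs x).deriv,
      (aux_yy (1 - 2 * ε) ε (Real.sinh (π * (1 - 2 * ε) * x)) y hs.ne').deriv,
      ← add_div, div_eq_zero_iff]
    left
    have hC : Real.cosh (π * (1 - 2 * ε) * x) ^ 2
        = Real.sinh (π * (1 - 2 * ε) * x) ^ 2 + 1 := Real.cosh_sq _
    have hsc : Real.sin (π * ((1 - 2 * ε) * y + ε)) ^ 2
        + Real.cos (π * ((1 - 2 * ε) * y + ε)) ^ 2 = 1 := Real.sin_sq_add_cos_sq _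
    linear_combination
      (2 * (π * (1 - 2 * ε)) ^ 2 * Real.sin (π * ((1 - 2 * ε) * y + ε))
        * Real.sinh (π * (1 - 2 * ε) * x)) * hC
      - (2 * (π * (1 - 2 * ε)) ^ 2 * Real.sin (π * ((1 - 2 * ε) * y + ε))
        * Real.sinh (π * (1 - 2 * ε) * x)) * hsc
  · -- limits
    intro y hy
    have hs : 0 < Real.sin (π * ((1 - 2 * ε) * y + ε)) := hsin y hy
    constructor
    · have h1 : Tendsto (fun x : ℝ => π * (1 - 2 * ε) * x) atTop atTop :=
        Tendsto.const_mul_atTop ha tendsto_id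
      have h2 : Tendsto (fun x : ℝ => Real.sinh (π * (1 - 2 * ε) * x)) atTop atTop :=
        sinh_tendsto_atTop.comp h1
      have h3 := h2.atTop_div_const hs
      have h4 : Tendsto (fun x : ℝ => Real.arctan (Real.sinh (π * (1 - 2 * ε) * x)
          / Real.sin (π * ((1 - 2 * ε) * y + ε)))) atTop (nhds (π / 2)) :=
        (Real.tendsto_arctan_atTop.mono_right nhdsWithin_le_nhds).comp h3
      have h5 := (tendsto_const_nhds (x := π / 2) (f := atTop (α := ℝ))).sub h4
      simpa using h5
    · have h1 : Tendsto (fun x : ℝ => π * (1 - 2 * ε) * x) atBot atBot :=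
        Tendsto.const_mul_atBot ha tendsto_id
      have h2 : Tendsto (fun x : ℝ => Real.sinh (π * (1 - 2 * ε) * x)) atBot atBot :=
        sinh_tendsto_atBot.comp h1
      have h3 := h2.atBot_div_const hs
      have h4 : Tendsto (fun x : ℝ => Real.arctan (Real.sinh (π * (1 - 2 * ε) * x)
          / Real.sin (π * ((1 - 2 * ε) * y + ε)))) atBot (nhds (-(π / 2))) :=
        (Real.tendsto_arctan_atBot.mono_right nhdsWithin_le_nhds).comp h3
      have h5 := (tendsto_const_nhds (x := π / 2) (f := atBot (α := ℝ))).sub h4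
      have : π / 2 - -(π / 2) = π := by ring
      rw [this] at h5
      exact h5
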